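/- arXiv:2305.18636 — 2 statements merged into one kernel-verified Lean document; each statement's English description precedes it below -/
import Mathlib

section
/- Fix $d\ge 1$, $p>0$ and $\eta\in(0,\min(1/2,p/d)]$. Define $\varphi(x)=x^2$ if $p>d/2$, $\varphi(x)=(x/\log(2+1/x))^2$ if $p=d/2$, $\varphi(x)=x^{d/p}$ if $p<d/2$, and define $\varphi_\eta(x)=x^{1/\eta}$ if $p\ne d/2$, $\varphi_\eta(x)=x^{1/\eta}/(\log(2+1/x))^2$ if $p=d/2$. Then for all $x>0$ and all $a$ with $x^{1/\eta}\le a\le 1$: $a\,\varphi(x/a^{\eta})\ge \varphi_\eta(x)$. -/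
/-!
Since `a * (x / a ^ η) ^ c = a ^ (1 - η c) * x ^ c` and `a ≥ x ^ (1 / η)`, the left-hand side is at
least `x ^ ((1 - η c) / η + c) = x ^ (1 / η)` as soon as `η c ≤ 1`; this applies with `c = 2`
(as `η ≤ 1/2`) and with `c = d / p` (as `η ≤ p / d`). In the critical case `p = d / 2` the
logarithmic factor only helps, because `a ≤ 1` gives `x / a ^ η ≥ x` and `y ↦ log (2 + 1 / y)` is
antitone.
-/

open Real

lemma rpow_one_div_le_mul_div_rpow_rpow {η c x a : ℝ} (hη : 0 < η) (hηc : η * c ≤ 1)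
    (hx : 0 < x) (ha : x ^ (1 / η) ≤ a) :
    x ^ (1 / η) ≤ a * (x / a ^ η) ^ c := by
  have hxη : 0 < x ^ (1 / η) := rpow_pos_of_pos hx _
  have ha0 : 0 < a := hxη.trans_le ha
  have hsplit : x ^ (1 / η) = (x ^ (1 / η)) ^ (1 - η * c) * x ^ c := by
    rw [← rpow_mul hx.le, ← rpow_add hx]
    congr 1
    field_simp
    ring
  have hrewrite : a * (x / a ^ η) ^ c = a ^ (1 - η * c) * x ^ c := by
    rw [div_rpow hx.le (rpow_nonneg ha0.le _), ← rpow_mul ha0.le, rpow_sub ha0, rpow_one]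
    ring
  rw [hrewrite, hsplit]
  gcongr

lemma log_two_add_one_div_pos {x : ℝ} (hx : 0 < x) : 0 < log (2 + 1 / x) :=
  log_pos (by linarith [one_div_pos.mpr hx])

lemma rpow_one_div_div_log_sq_le {η x a : ℝ} (hη : 0 < η) (hη2 : η ≤ 1 / 2) (hx : 0 < x)
    (ha : x ^ (1 / η) ≤ a) (ha1 : a ≤ 1) :
    x ^ (1 / η) / log (2 + 1 / x) ^ 2 ≤ a * (x / a ^ η / log (2 + 1 / (x / a ^ η))) ^ 2 := by
  have ha0 : 0 < a := (rpow_pos_of_pos hx _).trans_le ha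
  set y := x / a ^ η
  have hxy : x ≤ y := le_div_self hx.le (rpow_pos_of_pos ha0 _) (rpow_le_one ha0.le ha1 hη.le)
  have hpow : x ^ (1 / η) ≤ a * y ^ 2 := by
    simpa using rpow_one_div_le_mul_div_rpow_rpow (c := 2) hη (by linarith) hx ha
  have hlogy := log_two_add_one_div_pos (hx.trans_le hxy)
  calc x ^ (1 / η) / log (2 + 1 / x) ^ 2
      ≤ x ^ (1 / η) / log (2 + 1 / y) ^ 2 := by gcongr
    _ ≤ a * y ^ 2 / log (2 + 1 / y) ^ 2 := by gcongr
    _ = a * (y / log (2 + 1 / y)) ^ 2 := by ring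

theorem stmt2_general (d : ℕ) (p η : ℝ)
    (hη : η ∈ Set.Ioc (0 : ℝ) (min (1/2) (p / d)))
    (φ : ℝ → ℝ)
    (hφ : ∀ x : ℝ, φ x =
      if p > (d : ℝ) / 2 then x ^ 2
      else if p = (d : ℝ) / 2 then (x / Real.log (2 + 1/x)) ^ 2
      else x ^ ((d : ℝ) / p))
    (φη : ℝ → ℝ)
    (hφη : ∀ x : ℝ, φη x =
      if p = (d : ℝ) / 2 then x ^ (1/η) / (Real.log (2 + 1/x)) ^ 2 else x ^ (1/η)) :
    ∀ x > (0 : ℝ), ∀ a : ℝ, x ^ (1/η) ≤ a → a ≤ 1 →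
      a * φ (x / a ^ η) ≥ φη x := by
  obtain ⟨hη0, hηle⟩ := hη
  have hη2 : η ≤ 1 / 2 := hηle.trans (min_le_left _ _)
  have hηpd : η ≤ p / d := hηle.trans (min_le_right _ _)
  intro x hx a ha ha1
  rw [hφ, hφη, ge_iff_le]
  split_ifs with hcrit hgt hgt
  · exact absurd hcrit hgt.ne'
  · exact rpow_one_div_div_log_sq_le hη0 hη2 hx ha ha1
  · simpa using rpow_one_div_le_mul_div_rpow_rpow (c := 2) hη0 (by linarith) hx ha
  · have hηc : η * (d / p) ≤ 1 := by
      rw [← inv_div]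
      exact mul_inv_le_one_of_le₀ hηpd (hη0.le.trans hηpd)
    exact rpow_one_div_le_mul_div_rpow_rpow hη0 hηc hx ha

/-- Lemma (phi b): a·φ(x/a^η) ≥ φ_η(x) for x^{1/η} ≤ a ≤ 1. -/
theorem stmt2 (d : ℕ) (hd : 1 ≤ d) (p η : ℝ) (hp : 0 < p)
    (hη : η ∈ Set.Ioc (0 : ℝ) (min (1/2) (p / d)))
    (φ : ℝ → ℝ)
    (hφ : ∀ x : ℝ, φ x =
      if p > (d : ℝ) / 2 then x ^ 2
      else if p = (d : ℝ) / 2 then (x / Real.log (2 + 1/x)) ^ 2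
      else x ^ ((d : ℝ) / p))
    (φη : ℝ → ℝ)
    (hφη : ∀ x : ℝ, φη x =
      if p = (d : ℝ) / 2 then x ^ (1/η) / (Real.log (2 + 1/x)) ^ 2 else x ^ (1/η)) :
    ∀ x > (0 : ℝ), ∀ a : ℝ, x ^ (1/η) ≤ a → a ≤ 1 →
      a * φ (x / a ^ η) ≥ φη x :=
  stmt2_general d p η hη φ hφ φη hφη
end

section
/- Let $x>0$ and $a\ge x$. Then $\log(2+a/x)\le \log(2+1/x)\,\big(\log(\max(a,1))/\log(2+1/a)+1\big)$. -/
open Real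

/-! Since `max a 1 ≥ 1` and `max a 1 ≥ a`, we have `2 + a / x ≤ max a 1 * (2 + 1 / x)`, so
`log (2 + a / x) ≤ log (max a 1) + log (2 + 1 / x)`. The remaining term `log (max a 1)` is
absorbed by monotonicity: `x ≤ a` gives `1 < 2 + 1 / a ≤ 2 + 1 / x`. -/

lemma two_add_div_le_max_one_mul {a x : ℝ} (hx : 0 < x) :
    2 + a / x ≤ max a 1 * (2 + 1 / x) := by
  have h1 : 1 ≤ max a 1 := le_max_right a 1
  have ha : a / x ≤ max a 1 / x := by gcongr; exact le_max_left a 1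
  calc 2 + a / x ≤ 2 * max a 1 + max a 1 / x := by linarith
    _ = max a 1 * (2 + 1 / x) := by ring

lemma log_two_add_div_le {a x : ℝ} (ha : 0 ≤ a) (hx : 0 < x) :
    log (2 + a / x) ≤ log (max a 1) + log (2 + 1 / x) := by
  rw [← log_mul (by positivity) (by positivity)]
  exact log_le_log (by positivity) (two_add_div_le_max_one_mul hx)

lemma le_mul_div_of_le {u c d : ℝ} (hu : 0 ≤ u) (hc : 0 < c) (hcd : c ≤ d) :
    u ≤ d * (u / c) :=
  calc u = c * (u / c) := (mul_div_cancel₀ u hc.ne').symm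
    _ ≤ d * (u / c) := by gcongr

/-- log(2 + a/x) ≤ log(2 + 1/x)·(log(max(a,1))/log(2+1/a) + 1) for 0 < x ≤ a. -/
theorem stmt4 (a x : ℝ) (hx : 0 < x) (hax : x ≤ a) :
    Real.log (2 + a / x) ≤
      Real.log (2 + 1/x) * (Real.log (max a 1) / Real.log (2 + 1/a) + 1) := by
  have ha : 0 < a := hx.trans_le hax
  have hlog_pos : 0 < log (2 + 1 / a) := log_pos (by linarith [one_div_pos.mpr ha])
  have hlog_mono : log (2 + 1 / a) ≤ log (2 + 1 / x) := by
    apply log_le_log (by positivity); gcongr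
  have hlog_max : 0 ≤ log (max a 1) := log_nonneg (le_max_right a 1)
  calc log (2 + a / x) ≤ log (max a 1) + log (2 + 1 / x) := log_two_add_div_le ha.le hx
    _ ≤ log (2 + 1 / x) * (log (max a 1) / log (2 + 1 / a)) + log (2 + 1 / x) := by
      gcongr; exact le_mul_div_of_le hlog_max hlog_pos hlog_mono
    _ = log (2 + 1 / x) * (log (max a 1) / log (2 + 1 / a) + 1) := by ring
end
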